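/- arXiv:2103.00651 — 4 statements merged into one kernel-verified Lean document; each statement's English description precedes it below -/
import Mathlib

section
/- Let (X, d_X) be a Polish metric space, let ν be a Borel probability measure on X, and let X ~ ν. Suppose that every 1-Lipschitz function g : (X, d_X) → ℝ with E_ν[g(X)] finite satisfies E_ν[exp(λ(g(X) − E_ν[g(X)]))] ≤ exp(λ²σ²/2) for all λ ∈ ℝ. Then for every L-Lipschitz function f : X → ℝ^k (with respect to d_X on the domain and the Euclidean norm ‖·‖₂ on ℝ^k) with E_ν[f(X)] finite in every coordinate, every ε > 0 and every ε' ∈ (0,1]: P(‖f(X) − E_ν[f(X)]‖₂ ≥ ε) ≤ (1 + 2/ε')^k · exp(−ε²(1−ε')² / (2σ²L²)). -/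
open MeasureTheory
open scoped ENNReal Classical

/-- The Euclidean (`ℓ₂`) norm on `ℝ^k`. -/
noncomputable def l2norm {k : ℕ} (y : Fin k → ℝ) : ℝ := Real.sqrt (∑ i, y i ^ 2)

open Metric in
lemma sep_card_bound {k : ℕ} {ε' : ℝ} (h1 : 0 < ε') (F : Finset (EuclideanSpace ℝ (Fin k)))
    (hF : ∀ v ∈ F, ‖v‖ = 1)
    (hsep : (↑F : Set (EuclideanSpace ℝ (Fin k))).Pairwise fun a b => ε' < dist a b) :
    (F.card : ℝ) ≤ (1 + 2 / ε') ^ k := by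
  classical
  have hr : (0:ℝ) < ε' / 2 := by linarith
  set c := volume (Metric.ball (0 : EuclideanSpace ℝ (Fin k)) 1) with hc
  have hc0 : c ≠ 0 := (measure_ball_pos volume _ one_pos).ne'
  have hctop : c ≠ ⊤ := measure_ball_lt_top.ne
  have hdisj : (↑F : Set (EuclideanSpace ℝ (Fin k))).PairwiseDisjoint
      (fun v => Metric.ball v (ε'/2)) := by
    intro a ha b hb hab
    exact Metric.ball_disjoint_ball (by linarith [hsep ha hb hab])
  have hvol := measure_biUnion_finset (μ := volume) hdisj (fun v _ => measurableSet_ball)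
  have hball : ∀ v : EuclideanSpace ℝ (Fin k),
      volume (Metric.ball v (ε'/2)) = ENNReal.ofReal ((ε'/2) ^ k) * c := by
    intro v
    rw [Measure.addHaar_ball_of_pos volume v hr]
    simp [hc]
  have hsub : (⋃ v ∈ F, Metric.ball v (ε'/2)) ⊆
      Metric.ball (0 : EuclideanSpace ℝ (Fin k)) (1 + ε'/2) := by
    intro y hy
    simp only [Set.mem_iUnion] at hy
    obtain ⟨v, hv, hyv⟩ := hy
    have hv1 := hF v hv
    rw [Metric.mem_ball] at hyv ⊢
    have h2 : dist v 0 = 1 := by rw [dist_zero_right, hv1]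
    calc dist y 0 ≤ dist y v + dist v 0 := dist_triangle _ _ _
    _ < ε'/2 + 1 := by rw [h2]; linarith
    _ ≤ 1 + ε'/2 := by linarith
  have key : (F.card : ℝ≥0∞) * (ENNReal.ofReal ((ε'/2) ^ k) * c) ≤
      ENNReal.ofReal ((1 + ε'/2) ^ k) * c := by
    calc (F.card : ℝ≥0∞) * (ENNReal.ofReal ((ε'/2) ^ k) * c)
        = ∑ v ∈ F, volume (Metric.ball v (ε'/2)) := by
          rw [Finset.sum_congr rfl (fun v _ => hball v), Finset.sum_const, nsmul_eq_mul]
      _ = volume (⋃ v ∈ F, Metric.ball v (ε'/2)) := hvol.symm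
      _ ≤ volume (Metric.ball (0 : EuclideanSpace ℝ (Fin k)) (1 + ε'/2)) := measure_mono hsub
      _ = ENNReal.ofReal ((1 + ε'/2) ^ k) * c := by
          rw [Measure.addHaar_ball_of_pos volume _ (by linarith : (0:ℝ) < 1 + ε'/2)]; simp [hc]
  rw [← mul_assoc] at key
  rw [ENNReal.mul_le_mul_iff_left hc0 hctop] at key
  have key2 : (F.card : ℝ) * (ε'/2) ^ k ≤ (1 + ε'/2) ^ k := by
    rw [← ENNReal.ofReal_le_ofReal_iff (by positivity), ENNReal.ofReal_mul (by positivity),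
      ENNReal.ofReal_natCast]
    exact key
  have hp : (0:ℝ) < (ε'/2) ^ k := by positivity
  rw [← le_div_iff₀ hp] at key2
  calc (F.card : ℝ) ≤ (1 + ε'/2) ^ k / (ε'/2) ^ k := key2
    _ = (1 + 2 / ε') ^ k := by rw [← div_pow]; congr 1; field_simp; ring

open Metric in
lemma net_exists (k : ℕ) {ε' : ℝ} (h1 : 0 < ε') :
    ∃ s : Finset (EuclideanSpace ℝ (Fin k)), ((s.card : ℝ) ≤ (1 + 2 / ε') ^ k) ∧
      (∀ v ∈ s, ‖v‖ = 1) ∧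
      ∀ u : EuclideanSpace ℝ (Fin k), ‖u‖ = 1 → ∃ v ∈ s, ‖u - v‖ ≤ ε' := by
  classical
  set S : Set (Set (EuclideanSpace ℝ (Fin k))) :=
    {T | T ⊆ Metric.sphere 0 1 ∧ T.Pairwise fun a b => ε' < dist a b} with hS
  have hempty : (∅ : Set (EuclideanSpace ℝ (Fin k))) ∈ S := ⟨Set.empty_subset _, Set.pairwise_empty _⟩
  obtain ⟨T, -, hTmax⟩ := zorn_subset_nonempty S (fun c hcS hchain _ => by
    refine ⟨⋃₀ c, ⟨?_, ?_⟩, fun s hs => Set.subset_sUnion_of_mem hs⟩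
    · exact Set.sUnion_subset fun t ht => (hcS ht).1
    · intro a ha b hb hab
      obtain ⟨ta, hta, hat⟩ := ha
      obtain ⟨tb, htb, hbt⟩ := hb
      rcases hchain.total hta htb with h | h
      · exact (hcS htb).2 (h hat) hbt hab
      · exact (hcS hta).2 hat (h hbt) hab) ∅ hempty
  have hTsub : T ⊆ Metric.sphere 0 1 := hTmax.1.1
  have hTsep : T.Pairwise fun a b => ε' < dist a b := hTmax.1.2
  -- every finite subset has bounded card
  have hbnd : ∀ F : Finset (EuclideanSpace ℝ (Fin k)), ↑F ⊆ T →
      (F.card : ℝ) ≤ (1 + 2 / ε') ^ k := by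
    intro F hFT
    exact sep_card_bound h1 F
      (fun v hv => by simpa using (hTsub (hFT hv)))
      (hTsep.mono hFT)
  have hTfin : T.Finite := by
    by_contra hinf
    obtain ⟨F, hFT, hFcard⟩ := Set.Infinite.exists_subset_card_eq hinf
      (⌈(1 + 2 / ε') ^ k⌉₊ + 1)
    have := hbnd F hFT
    rw [hFcard] at this
    have h2 : (1 + 2 / ε') ^ k ≤ (⌈(1 + 2 / ε') ^ k⌉₊ : ℝ) := Nat.le_ceil _
    push_cast at this
    linarith
  refine ⟨hTfin.toFinset, ?_, ?_, ?_⟩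
  · have := hbnd hTfin.toFinset (by simp)
    simpa using this
  · intro v hv
    rw [Set.Finite.mem_toFinset] at hv
    simpa using hTsub hv
  · intro u hu
    by_cases huT : u ∈ T
    · exact ⟨u, by rwa [Set.Finite.mem_toFinset], by simp [h1.le]⟩
    by_contra hno
    push_neg at hno
    -- then insert u T is in S, contradicting maximality
    have hins : insert u T ∈ S := by
      constructor
      · exact Set.insert_subset (by simpa using hu) hTsub
      · rw [@Set.pairwise_insert_of_symmetric _ (fun a b => ε' < dist a b) _ _ ⟨fun a b h => by rwa [dist_comm]⟩]
        refine ⟨hTsep, fun v hv hne => ?_⟩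
        have := hno v (by rwa [Set.Finite.mem_toFinset])
        rw [← dist_eq_norm] at this
        linarith [this]
    have := hTmax.2 hins (Set.subset_insert u T)
    exact huT (this (Set.mem_insert u T))

theorem stmt5 {X : Type*} [MetricSpace X] [CompleteSpace X]
    [TopologicalSpace.SeparableSpace X] [MeasurableSpace X] [BorelSpace X]
    (ν : Measure X) [IsProbabilityMeasure ν]
    (σ : ℝ) (hσ : 0 < σ)
    (hsub : ∀ g : X → ℝ, (∀ x x', dist (g x) (g x') ≤ dist x x') → Integrable g ν →
      ∀ lam : ℝ,
        ∫⁻ x, ENNReal.ofReal (Real.exp (lam * (g x - ∫ y, g y ∂ν))) ∂ν ≤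
          ENNReal.ofReal (Real.exp (lam ^ 2 * σ ^ 2 / 2)))
    (k : ℕ) (L : ℝ) (hL : 0 < L) (f : X → Fin k → ℝ)
    (hf : ∀ x x', l2norm (fun i => f x i - f x' i) ≤ L * dist x x')
    (hint : ∀ i, Integrable (fun x => f x i) ν)
    (ε : ℝ) (hε : 0 < ε) (ε' : ℝ) (hε' : ε' ∈ Set.Ioc (0 : ℝ) 1) :
    ν {x | ε ≤ l2norm (fun i => f x i - ∫ y, f y i ∂ν)} ≤
      ENNReal.ofReal ((1 + 2 / ε') ^ k *
        Real.exp (-(ε ^ 2 * (1 - ε') ^ 2) / (2 * σ ^ 2 * L ^ 2))) := by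
  classical
  obtain ⟨hε'0, hε'1⟩ := hε'
  set toE : (Fin k → ℝ) → EuclideanSpace ℝ (Fin k) := fun y => (WithLp.equiv 2 (Fin k → ℝ)).symm y with htoE
  have hnorm : ∀ y : Fin k → ℝ, l2norm y = ‖toE y‖ := by
    intro y
    rw [EuclideanSpace.norm_eq]
    simp [l2norm, Real.norm_eq_abs, sq_abs, htoE]
  have hip : ∀ (v : EuclideanSpace ℝ (Fin k)) (y : Fin k → ℝ),
      inner ℝ v (toE y) = ∑ i, v i * y i := by
    intro v y
    simp [PiLp.inner_apply, RCLike.inner_apply, htoE, mul_comm]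
  set m : Fin k → ℝ := fun i => ∫ y, f y i ∂ν with hm
  set Y : X → Fin k → ℝ := fun x i => f x i - m i with hY
  set t : ℝ := ε * (1 - ε') with ht
  have ht0 : 0 ≤ t := mul_nonneg hε.le (by linarith)
  set lam : ℝ := t / (L * σ ^ 2) with hlam
  have hlam0 : 0 ≤ lam := div_nonneg ht0 (by positivity)
  set B : EuclideanSpace ℝ (Fin k) → Set X := fun v => {x | t ≤ ∑ i, v i * Y x i} with hB
  -- Chernoff bound for each unit vector
  have chernoff : ∀ v : EuclideanSpace ℝ (Fin k), ‖v‖ = 1 →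
      ν (B v) ≤ ENNReal.ofReal (Real.exp (-(t ^ 2) / (2 * σ ^ 2 * L ^ 2))) := by
    intro v hv
    set g : X → ℝ := fun x => L⁻¹ * ∑ i, v i * f x i with hg
    have hCS : ∀ y : Fin k → ℝ, |∑ i, v i * y i| ≤ ‖v‖ * l2norm y := by
      intro y
      rw [hnorm, ← hip]
      exact abs_real_inner_le_norm v (toE y)
    have hgl : ∀ x x', dist (g x) (g x') ≤ dist x x' := by
      intro x x'
      rw [Real.dist_eq, hg]
      have : L⁻¹ * ∑ i, v i * f x i - L⁻¹ * ∑ i, v i * f x' i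
          = L⁻¹ * ∑ i, v i * (f x i - f x' i) := by
        rw [← mul_sub, ← Finset.sum_sub_distrib]
        congr 1
        exact Finset.sum_congr rfl fun i _ => (mul_sub _ _ _).symm
      rw [this, abs_mul, abs_of_pos (inv_pos.mpr hL)]
      calc L⁻¹ * |∑ i, v i * (f x i - f x' i)|
          ≤ L⁻¹ * (‖v‖ * l2norm fun i => f x i - f x' i) := by
            apply mul_le_mul_of_nonneg_left (hCS _) (inv_pos.mpr hL).le
        _ ≤ L⁻¹ * (L * dist x x') := by
            rw [hv, one_mul]
            exact mul_le_mul_of_nonneg_left (hf x x') (inv_pos.mpr hL).le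
        _ = dist x x' := by field_simp
    have hgint : Integrable g ν :=
      (integrable_finset_sum _ fun i _ => (hint i).const_mul (v i)).const_mul L⁻¹
    have hEg : ∫ y, g y ∂ν = L⁻¹ * ∑ i, v i * m i := by
      rw [hg]
      rw [integral_const_mul]
      congr 1
      rw [integral_finset_sum _ fun i _ => (hint i).const_mul (v i)]
      exact Finset.sum_congr rfl fun i _ => integral_const_mul _ _
    have hgd : ∀ x, g x - ∫ y, g y ∂ν = L⁻¹ * ∑ i, v i * Y x i := by
      intro x
      rw [hEg, hg]
      simp only []
      rw [← mul_sub, ← Finset.sum_sub_distrib]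
      congr 1
      exact Finset.sum_congr rfl fun i _ => (mul_sub _ _ _).symm
    have hgmeas : Measurable g :=
      (LipschitzWith.of_dist_le' (K := 1) (by simpa using hgl)).continuous.measurable
    set F : X → ℝ≥0∞ := fun x => ENNReal.ofReal (Real.exp (lam * (g x - ∫ y, g y ∂ν))) with hF
    have hFmeas : AEMeasurable F ν :=
      ((((hgmeas.sub measurable_const).const_mul lam).exp).ennreal_ofReal).aemeasurable
    set c : ℝ≥0∞ := ENNReal.ofReal (Real.exp (lam * t / L)) with hc
    have hc0 : c ≠ 0 := by
      simp [hc, Real.exp_pos]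
    have hctop : c ≠ ⊤ := ENNReal.ofReal_ne_top
    have hBsub : B v ⊆ {x | c ≤ F x} := by
      intro x hx
      simp only [hB, Set.mem_setOf_eq] at hx
      simp only [hF, Set.mem_setOf_eq, hc]
      apply ENNReal.ofReal_le_ofReal
      apply Real.exp_le_exp.mpr
      rw [hgd x]
      calc lam * t / L = lam * (L⁻¹ * t) := by field_simp
        _ ≤ lam * (L⁻¹ * ∑ i, v i * Y x i) := by
            apply mul_le_mul_of_nonneg_left _ hlam0
            exact mul_le_mul_of_nonneg_left hx (inv_pos.mpr hL).le
    have key : c * ν (B v) ≤ ENNReal.ofReal (Real.exp (lam ^ 2 * σ ^ 2 / 2)) := by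
      calc c * ν (B v) ≤ c * ν {x | c ≤ F x} :=
            mul_le_mul_right (measure_mono hBsub) c
        _ ≤ ∫⁻ x, F x ∂ν := mul_meas_ge_le_lintegral₀ hFmeas c
        _ ≤ ENNReal.ofReal (Real.exp (lam ^ 2 * σ ^ 2 / 2)) := hsub g hgl hgint lam
    have hdiv : ν (B v) ≤ ENNReal.ofReal (Real.exp (lam ^ 2 * σ ^ 2 / 2)) / c := by
      rw [ENNReal.le_div_iff_mul_le (Or.inl hc0) (Or.inl hctop), mul_comm]
      exact key
    calc ν (B v) ≤ ENNReal.ofReal (Real.exp (lam ^ 2 * σ ^ 2 / 2)) / c := hdiv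
      _ = ENNReal.ofReal (Real.exp (lam ^ 2 * σ ^ 2 / 2 - lam * t / L)) := by
          rw [hc, ← ENNReal.ofReal_div_of_pos (Real.exp_pos _), ← Real.exp_sub]
      _ = ENNReal.ofReal (Real.exp (-(t ^ 2) / (2 * σ ^ 2 * L ^ 2))) := by
          congr 1
          rw [hlam]
          field_simp
          ring
  -- the net
  obtain ⟨s, hscard, hsnorm, hsnet⟩ := net_exists k hε'0
  -- event inclusion
  have hincl : {x | ε ≤ l2norm (fun i => f x i - ∫ y, f y i ∂ν)} ⊆ ⋃ v ∈ s, B v := by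
    intro x hx
    have hx' : ε ≤ l2norm (Y x) := hx
    set w : EuclideanSpace ℝ (Fin k) := toE (Y x) with hw
    have hwn : ε ≤ ‖w‖ := by rwa [← hnorm]
    have hw0 : ‖w‖ ≠ 0 := (hε.trans_le hwn).ne'
    set u : EuclideanSpace ℝ (Fin k) := ‖w‖⁻¹ • w with hu
    have hun : ‖u‖ = 1 := by
      rw [hu, norm_smul, norm_inv, norm_norm, inv_mul_cancel₀ hw0]
    obtain ⟨v, hvs, hvu⟩ := hsnet u hun
    refine Set.mem_iUnion₂.mpr ⟨v, hvs, ?_⟩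
    simp only [hB, Set.mem_setOf_eq]
    rw [← hip v (Y x), ← hw]
    have h1 : inner ℝ u w = ‖w‖ := by
      rw [hu, real_inner_smul_left, real_inner_self_eq_norm_sq, sq, ← mul_assoc,
        inv_mul_cancel₀ hw0, one_mul]
    have h2 : inner ℝ (u - v) w ≤ ε' * ‖w‖ := by
      calc inner ℝ (u - v) w ≤ ‖u - v‖ * ‖w‖ := real_inner_le_norm _ _
        _ ≤ ε' * ‖w‖ := mul_le_mul_of_nonneg_right hvu (norm_nonneg w)
    have h3 : inner ℝ v w = inner ℝ u w - inner ℝ (u - v) w := by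
      rw [inner_sub_left]; ring
    rw [h3, h1]
    have : (1 - ε') * ε ≤ (1 - ε') * ‖w‖ :=
      mul_le_mul_of_nonneg_left hwn (by linarith)
    nlinarith [h2]
  -- union bound
  calc ν {x | ε ≤ l2norm (fun i => f x i - ∫ y, f y i ∂ν)}
      ≤ ν (⋃ v ∈ s, B v) := measure_mono hincl
    _ ≤ ∑ v ∈ s, ν (B v) := measure_biUnion_finset_le s B
    _ ≤ ∑ _v ∈ s, ENNReal.ofReal (Real.exp (-(t ^ 2) / (2 * σ ^ 2 * L ^ 2))) :=
        Finset.sum_le_sum fun v hv => chernoff v (hsnorm v hv)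
    _ = (s.card : ℝ≥0∞) * ENNReal.ofReal (Real.exp (-(t ^ 2) / (2 * σ ^ 2 * L ^ 2))) := by
        rw [Finset.sum_const, nsmul_eq_mul]
    _ ≤ ENNReal.ofReal ((1 + 2 / ε') ^ k) *
        ENNReal.ofReal (Real.exp (-(t ^ 2) / (2 * σ ^ 2 * L ^ 2))) := by
        apply mul_le_mul_left
        rw [← ENNReal.ofReal_natCast]
        exact ENNReal.ofReal_le_ofReal hscard
    _ = ENNReal.ofReal ((1 + 2 / ε') ^ k *
        Real.exp (-(ε ^ 2 * (1 - ε') ^ 2) / (2 * σ ^ 2 * L ^ 2))) := by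
        rw [← ENNReal.ofReal_mul (by positivity)]
        congr 3
        rw [ht]
        ring
end

section
/- Let Y be a random vector in ℝ^k and let Z ~ N(0, I_k) be a standard Gaussian vector in ℝ^k independent of Y. Then for every λ ∈ ℝ and every ε > 0: P(‖Y‖₂ ≥ ε) ≤ exp(−λ²ε²/2) · E[exp(λ⟨Z, Y⟩)]. -/
open MeasureTheory ProbabilityTheory
open scoped ENNReal Classical

theorem auxLintegralPi {n : ℕ} {E : Fin n → Type*} [∀ i, MeasurableSpace (E i)]
    (μ : ∀ i, Measure (E i)) [∀ i, SigmaFinite (μ i)]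
    (f : ∀ i, E i → ℝ≥0∞) (hf : ∀ i, Measurable (f i)) :
    ∫⁻ x : ∀ i, E i, ∏ i, f i (x i) ∂Measure.pi μ = ∏ i, ∫⁻ x, f i x ∂μ i := by
  induction n with
  | zero => simp [lintegral_const]
  | succ n n_ih =>
    calc ∫⁻ x : ∀ i, E i, ∏ i, f i (x i) ∂Measure.pi μ
        = ∫⁻ p : E 0 × (∀ i : Fin n, E (Fin.succ i)),
            f 0 p.1 * ∏ i : Fin n, f (Fin.succ i) (p.2 i)
            ∂((μ 0).prod (Measure.pi fun i => μ (Fin.succ i))) := by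
          rw [← ((measurePreserving_piFinSuccAbove μ 0).symm).lintegral_comp_emb
            (MeasurableEquiv.measurableEmbedding _)]
          simp_rw [MeasurableEquiv.piFinSuccAbove_symm_apply, Fin.insertNthEquiv,
            Fin.prod_univ_succ, Fin.insertNth_zero, Equiv.coe_fn_mk, Fin.cons_succ,
            Fin.zero_succAbove, Fin.cons_zero]
          rfl
      _ = (∫⁻ x, f 0 x ∂μ 0) * ∏ i : Fin n, ∫⁻ x, f (Fin.succ i) x ∂μ (Fin.succ i) := by
          rw [lintegral_prod_mul (f := f 0)
            (g := fun x : ∀ i : Fin n, E (Fin.succ i) => ∏ i : Fin n, f (Fin.succ i) (x i))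
            (hf 0).aemeasurable
            (Finset.measurable_prod _ fun i _ =>
              (hf (Fin.succ i)).comp (measurable_pi_apply i)).aemeasurable,
            n_ih _ _ fun i => hf (Fin.succ i)]
      _ = ∏ i, ∫⁻ x, f i x ∂μ i := by rw [Fin.prod_univ_succ]

theorem auxGaussMGF (t : ℝ) :
    ∫⁻ x, ENNReal.ofReal (Real.exp (t * x)) ∂(gaussianReal 0 1) =
      ENNReal.ofReal (Real.exp (t ^ 2 / 2)) := by
  rw [gaussianReal_of_var_ne_zero 0 one_ne_zero,
    lintegral_withDensity_eq_lintegral_mul _ (measurable_gaussianPDF 0 1)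
      (by exact (Real.measurable_exp.comp (measurable_const.mul measurable_id)).ennreal_ofReal)]
  have : ∀ x : ℝ, (gaussianPDF 0 1 * fun x => ENNReal.ofReal (Real.exp (t * x))) x
      = ENNReal.ofReal (Real.exp (t ^ 2 / 2)) * gaussianPDF t 1 x := by
    intro x
    simp only [Pi.mul_apply, gaussianPDF, ← ENNReal.ofReal_mul (gaussianPDFReal_nonneg 0 1 x),
      ← ENNReal.ofReal_mul (Real.exp_nonneg _)]
    congr 1
    simp only [gaussianPDFReal, NNReal.coe_one, mul_one, sub_zero]
    rw [mul_assoc, mul_left_comm (Real.exp (t ^ 2 / 2))]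
    congr 1
    rw [← Real.exp_add, ← Real.exp_add]
    congr 1
    ring
  simp_rw [this]
  rw [lintegral_const_mul _ (measurable_gaussianPDF t 1), lintegral_gaussianPDF_eq_one t one_ne_zero,
    mul_one]

theorem stmt6 {Ω : Type*} [MeasurableSpace Ω] (P : Measure Ω) [IsProbabilityMeasure P]
    (k : ℕ) (Y Z : Ω → Fin k → ℝ) (hY : Measurable Y) (hZ : Measurable Z)
    (hZlaw : P.map Z = Measure.pi fun _ : Fin k => gaussianReal 0 1)
    (hindep : IndepFun Y Z P)
    (lam : ℝ) (ε : ℝ) (hε : 0 < ε) :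
    P {ω | ε ≤ Real.sqrt (∑ i, Y ω i ^ 2)} ≤
      ENNReal.ofReal (Real.exp (-(lam ^ 2 * ε ^ 2) / 2)) *
        ∫⁻ ω, ENNReal.ofReal (Real.exp (lam * ∑ i, Z ω i * Y ω i)) ∂P := by
  have hjoint : P.map (fun ω => (Y ω, Z ω)) = (P.map Y).prod (P.map Z) :=
    (indepFun_iff_map_prod_eq_prod_map_map hY.aemeasurable hZ.aemeasurable).mp hindep
  have hg : Measurable fun p : (Fin k → ℝ) × (Fin k → ℝ) =>
      ENNReal.ofReal (Real.exp (lam * ∑ i, p.2 i * p.1 i)) := by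
    apply Measurable.ennreal_ofReal
    apply Real.measurable_exp.comp
    apply measurable_const.mul
    exact Finset.measurable_sum _ fun i _ =>
      ((measurable_pi_apply i).comp measurable_snd).mul
        ((measurable_pi_apply i).comp measurable_fst)
  have hh : Measurable fun y : Fin k → ℝ =>
      ENNReal.ofReal (Real.exp (lam ^ 2 * (∑ i, y i ^ 2) / 2)) := by
    apply Measurable.ennreal_ofReal
    apply Real.measurable_exp.comp
    apply Measurable.div_const
    exact measurable_const.mul (Finset.measurable_sum _ fun i _ =>
      (measurable_pi_apply i).pow_const 2)
  have hI : (∫⁻ ω, ENNReal.ofReal (Real.exp (lam * ∑ i, Z ω i * Y ω i)) ∂P)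
      = ∫⁻ y, ENNReal.ofReal (Real.exp (lam ^ 2 * (∑ i, y i ^ 2) / 2)) ∂(P.map Y) := by
    have h1 : (∫⁻ ω, ENNReal.ofReal (Real.exp (lam * ∑ i, Z ω i * Y ω i)) ∂P)
        = ∫⁻ p : (Fin k → ℝ) × (Fin k → ℝ),
            ENNReal.ofReal (Real.exp (lam * ∑ i, p.2 i * p.1 i))
            ∂((P.map Y).prod (P.map Z)) := by
      rw [← hjoint, lintegral_map hg (hY.prodMk hZ)]
    rw [h1, hZlaw, lintegral_prod _ hg.aemeasurable]
    refine lintegral_congr fun y => ?_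
    have hsum : ∀ z : Fin k → ℝ, lam * ∑ i, z i * y i = ∑ i, lam * y i * z i := by
      intro z
      rw [Finset.mul_sum]
      exact Finset.sum_congr rfl fun i _ => by ring
    calc ∫⁻ z, ENNReal.ofReal (Real.exp (lam * ∑ i, z i * y i))
          ∂(Measure.pi fun _ : Fin k => gaussianReal 0 1)
        = ∫⁻ z, ∏ i, ENNReal.ofReal (Real.exp (lam * y i * z i))
          ∂(Measure.pi fun _ : Fin k => gaussianReal 0 1) := by
          refine lintegral_congr fun z => ?_
          rw [hsum z, Real.exp_sum, ENNReal.ofReal_prod_of_nonneg fun i _ => Real.exp_nonneg _]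
      _ = ∏ i, ∫⁻ x, ENNReal.ofReal (Real.exp (lam * y i * x)) ∂gaussianReal 0 1 :=
          auxLintegralPi _ _ fun i =>
            (Real.measurable_exp.comp (measurable_const.mul measurable_id)).ennreal_ofReal
      _ = ∏ i, ENNReal.ofReal (Real.exp ((lam * y i) ^ 2 / 2)) := by
          simp_rw [auxGaussMGF]
      _ = ENNReal.ofReal (Real.exp (lam ^ 2 * (∑ i, y i ^ 2) / 2)) := by
          rw [← ENNReal.ofReal_prod_of_nonneg fun i _ => Real.exp_nonneg _, ← Real.exp_sum]
          congr 2
          simp_rw [mul_pow]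
          rw [← Finset.sum_div, ← Finset.mul_sum]
  rw [hI]
  set S : Set (Fin k → ℝ) := {y | ε ≤ Real.sqrt (∑ i, y i ^ 2)} with hS
  have hSm : MeasurableSet S := by
    apply measurableSet_le measurable_const
    exact Real.continuous_sqrt.measurable.comp
      (Finset.measurable_sum _ fun i _ => (measurable_pi_apply i).pow_const 2)
  have hmap : P {ω | ε ≤ Real.sqrt (∑ i, Y ω i ^ 2)} = (P.map Y) S := by
    rw [Measure.map_apply hY hSm]
    rfl
  rw [hmap, ← lintegral_const_mul _ hh]
  calc (P.map Y) S = ∫⁻ _ in S, 1 ∂(P.map Y) := (setLIntegral_one S).symm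
    _ ≤ ∫⁻ y in S, ENNReal.ofReal (Real.exp (-(lam ^ 2 * ε ^ 2) / 2)) *
          ENNReal.ofReal (Real.exp (lam ^ 2 * (∑ i, y i ^ 2) / 2)) ∂(P.map Y) := by
        refine setLIntegral_mono' hSm fun y hy => ?_
        rw [← ENNReal.ofReal_mul (Real.exp_nonneg _), ← Real.exp_add, ← ENNReal.ofReal_one,
          ← Real.exp_zero]
        refine ENNReal.ofReal_le_ofReal (Real.exp_le_exp.mpr ?_)
        have hsum0 : (0 : ℝ) ≤ ∑ i, y i ^ 2 := Finset.sum_nonneg fun i _ => sq_nonneg _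
        have h2 : ε ^ 2 ≤ ∑ i, y i ^ 2 := by
          have h3 : ε ^ 2 ≤ Real.sqrt (∑ i, y i ^ 2) ^ 2 :=
            pow_le_pow_left₀ hε.le hy 2
          rwa [Real.sq_sqrt hsum0] at h3
        nlinarith [sq_nonneg lam]
    _ ≤ ∫⁻ y, ENNReal.ofReal (Real.exp (-(lam ^ 2 * ε ^ 2) / 2)) *
          ENNReal.ofReal (Real.exp (lam ^ 2 * (∑ i, y i ^ 2) / 2)) ∂(P.map Y) :=
        setLIntegral_le_lintegral S _
end

section
/- Let Y be a random vector in ℝ^k such that for every h ∈ ℝ^k, E[exp(⟨h, Y⟩)] ≤ exp(‖h‖₂² s²/2), where s > 0. Let Z ~ N(0, I_k) be standard Gaussian and independent of Y. Then for every λ ∈ ℝ with λ²s² < 1: E[exp(λ⟨Z, Y⟩)] ≤ (1 − λ²s²)^{−k/2}. -/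
open MeasureTheory ProbabilityTheory
open scoped ENNReal Classical

open Real in
lemma gauss_one_dim_aux {t : ℝ} (ht : 2 * t < 1) :
    ∫⁻ x, ENNReal.ofReal (Real.exp (t * x ^ 2)) ∂(gaussianReal 0 1)
      = ENNReal.ofReal ((1 - 2 * t) ^ (-(1:ℝ) / 2)) := by
  have hb : (0:ℝ) < 1/2 - t := by linarith
  rw [gaussianReal_of_var_ne_zero _ one_ne_zero,
    lintegral_withDensity_eq_lintegral_mul _ (measurable_gaussianPDF 0 1)
      (by measurability)]
  have heq : ∀ x : ℝ, (gaussianPDF 0 1 * fun x => ENNReal.ofReal (rexp (t * x ^ 2))) x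
      = ENNReal.ofReal ((√(2 * π))⁻¹ * rexp (-(1/2 - t) * x ^ 2)) := by
    intro x
    simp only [Pi.mul_apply, gaussianPDF, gaussianPDFReal, NNReal.coe_one, mul_one, sub_zero]
    rw [← ENNReal.ofReal_mul (by positivity), mul_assoc, ← Real.exp_add]
    ring_nf
  simp_rw [heq]
  rw [← ofReal_integral_eq_lintegral_ofReal]
  · congr 1
    rw [integral_const_mul, integral_gaussian,
      show (-(1:ℝ)/2) = -(1/2) by norm_num, Real.rpow_neg (by linarith), ← Real.sqrt_eq_rpow,
      ← Real.sqrt_inv (2 * π), ← Real.sqrt_mul (by positivity), ← Real.sqrt_inv]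
    congr 1
    have hπ : π ≠ 0 := Real.pi_ne_zero
    have h1 : (1:ℝ) - 2*t ≠ 0 := by linarith
    field_simp
  · exact (integrable_exp_neg_mul_sq hb).const_mul _
  · exact Filter.Eventually.of_forall fun x => by positivity

lemma lintegral_pi_pow_aux (μ : Measure ℝ) [IsProbabilityMeasure μ] :
    ∀ (k : ℕ) (g : ℝ → ℝ≥0∞), Measurable g →
    ∫⁻ x : Fin k → ℝ, ∏ i, g (x i) ∂(Measure.pi fun _ : Fin k => μ)
      = (∫⁻ y, g y ∂μ) ^ k := by
  intro k
  induction k with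
  | zero =>
    intro g hg
    simp only [Finset.univ_eq_empty, Finset.prod_empty, lintegral_one, pow_zero]
    exact measure_univ
  | succ n ih =>
    intro g hg
    have hmp := (measurePreserving_piFinSuccAbove (fun _ : Fin (n+1) => μ) 0).symm
    rw [← hmp.lintegral_comp (f := fun x : Fin (n+1) → ℝ => ∏ i, g (x i))
      (Finset.measurable_prod _ fun i _ => hg.comp (measurable_pi_apply i))]
    simp only [MeasurableEquiv.piFinSuccAbove_symm_apply]
    simp only [Fin.insertNthEquiv, Equiv.coe_fn_mk, Fin.insertNth_zero,
      Fin.prod_univ_succ, Fin.cons_zero, Fin.cons_succ, Fin.zero_succAbove, cast_eq]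
    have h2 : Measurable fun y : Fin n → ℝ => ∏ i, g (y i) :=
      Finset.measurable_prod _ fun i _ => hg.comp (measurable_pi_apply i)
    rw [lintegral_prod_mul (f := g) (g := fun y : Fin n → ℝ => ∏ i, g (y i))
      hg.aemeasurable h2.aemeasurable, ih g hg, pow_succ]
    ring

theorem stmt7 {Ω : Type*} [MeasurableSpace Ω] (P : Measure Ω) [IsProbabilityMeasure P]
    (k : ℕ) (Y Z : Ω → Fin k → ℝ) (hY : Measurable Y) (hZ : Measurable Z)
    (s : ℝ) (hs : 0 < s)
    (hmgf : ∀ h : Fin k → ℝ,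
      ∫⁻ ω, ENNReal.ofReal (Real.exp (∑ i, h i * Y ω i)) ∂P ≤
        ENNReal.ofReal (Real.exp ((∑ i, h i ^ 2) * s ^ 2 / 2)))
    (hZlaw : P.map Z = Measure.pi fun _ : Fin k => gaussianReal 0 1)
    (hindep : IndepFun Y Z P)
    (lam : ℝ) (hlam : lam ^ 2 * s ^ 2 < 1) :
    ∫⁻ ω, ENNReal.ofReal (Real.exp (lam * ∑ i, Z ω i * Y ω i)) ∂P ≤
      ENNReal.ofReal ((1 - lam ^ 2 * s ^ 2) ^ (-(k : ℝ) / 2)) := by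
  haveI : IsProbabilityMeasure (P.map Y) := Measure.isProbabilityMeasure_map hY.aemeasurable
  haveI : IsProbabilityMeasure (P.map Z) := Measure.isProbabilityMeasure_map hZ.aemeasurable
  set c : ℝ := lam ^ 2 * s ^ 2 / 2 with hc
  have hc2 : 2 * c < 1 := by rw [hc]; linarith
  have hF : Measurable fun p : (Fin k → ℝ) × (Fin k → ℝ) =>
      ENNReal.ofReal (Real.exp (lam * ∑ i, p.1 i * p.2 i)) := by
    have hm : Measurable fun p : (Fin k → ℝ) × (Fin k → ℝ) => lam * ∑ i, p.1 i * p.2 i :=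
      measurable_const.mul (Finset.measurable_sum _ fun i _ =>
        ((measurable_pi_apply i).comp measurable_fst).mul
          ((measurable_pi_apply i).comp measurable_snd))
    exact ENNReal.measurable_ofReal.comp (Real.measurable_exp.comp hm)
  have hprod : P.map (fun ω => (Z ω, Y ω)) = (P.map Z).prod (P.map Y) :=
    (indepFun_iff_map_prod_eq_prod_map_map hZ.aemeasurable hY.aemeasurable).mp hindep.symm
  have hg1 : Measurable fun y : ℝ => ENNReal.ofReal (Real.exp (c * y ^ 2)) := by
    measurability
  calc ∫⁻ ω, ENNReal.ofReal (Real.exp (lam * ∑ i, Z ω i * Y ω i)) ∂P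
      = ∫⁻ p : (Fin k → ℝ) × (Fin k → ℝ),
          ENNReal.ofReal (Real.exp (lam * ∑ i, p.1 i * p.2 i))
          ∂((P.map Z).prod (P.map Y)) := by
        rw [← hprod, lintegral_map hF (hZ.prodMk hY)]
    _ = ∫⁻ z, ∫⁻ y, ENNReal.ofReal (Real.exp (lam * ∑ i, z i * y i)) ∂(P.map Y) ∂(P.map Z) :=
        lintegral_prod _ hF.aemeasurable
    _ ≤ ∫⁻ z, ENNReal.ofReal (Real.exp (c * ∑ i, z i ^ 2)) ∂(P.map Z) := by
        refine lintegral_mono fun z => ?_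
        have hmz : Measurable fun y : Fin k → ℝ =>
            ENNReal.ofReal (Real.exp (∑ i, (lam * z i) * y i)) := by
          have : Measurable fun y : Fin k → ℝ => ∑ i, (lam * z i) * y i :=
            Finset.measurable_sum _ fun i _ => (measurable_pi_apply i).const_mul _
          exact ENNReal.measurable_ofReal.comp (Real.measurable_exp.comp this)
        have h1 : (fun y : Fin k → ℝ => ENNReal.ofReal (Real.exp (lam * ∑ i, z i * y i)))
            = fun y : Fin k → ℝ => ENNReal.ofReal (Real.exp (∑ i, (lam * z i) * y i)) := by
          funext y
          rw [Finset.mul_sum]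
          simp_rw [mul_assoc]
        rw [h1, lintegral_map hmz hY]
        refine (hmgf fun i => lam * z i).trans (le_of_eq ?_)
        congr 1
        rw [Real.exp_eq_exp]
        simp_rw [mul_pow]
        rw [← Finset.mul_sum, hc]
        ring
    _ ≤ ENNReal.ofReal ((1 - lam ^ 2 * s ^ 2) ^ (-(k : ℝ) / 2)) := by
        rw [hZlaw]
        have hexp : ∀ z : Fin k → ℝ, ENNReal.ofReal (Real.exp (c * ∑ i, z i ^ 2))
            = ∏ i, ENNReal.ofReal (Real.exp (c * z i ^ 2)) := by
          intro z
          rw [← ENNReal.ofReal_prod_of_nonneg (fun i _ => (Real.exp_pos _).le),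
            ← Real.exp_sum, Finset.mul_sum]
        simp_rw [hexp]
        rw [lintegral_pi_pow_aux _ k _ hg1, gauss_one_dim_aux hc2,
          ← ENNReal.ofReal_pow (Real.rpow_nonneg (by linarith) _)]
        apply le_of_eq
        congr 1
        rw [← Real.rpow_natCast ((1 - 2 * c) ^ (-(1:ℝ)/2)) k, ← Real.rpow_mul (by linarith)]
        rw [show (1:ℝ) - 2 * c = 1 - lam ^ 2 * s ^ 2 by rw [hc]; ring]
        congr 1
        ring
end

section
/- Consider a time-homogeneous Markov chain on a finite state space E with transition matrix P whose Dobrushin coefficient satisfies r < 1, and let ν = P_ϱ be the law of X_{0:n−1} on E^n for an arbitrary initial distribution ϱ. Equip E^n with the Hamming metric d̃(x, x̃) = Σ_{k=0}^{n−1} 1(x_k ≠ x̃_k). Then for every probability measure μ on E^n: W₁(μ, ν) ≤ √( n·D(μ‖ν) / (2(1−r)²) ). -/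
open Finset
open scoped ENNReal Classical BigOperators

/-- Probability mass of a trajectory `x : Fin n → Fin K` under the Markov chain with
initial distribution `ρ` and transition matrix `Pm`:
`ρ (x 0) * ∏_{k=0}^{n-2} Pm (x k) (x (k+1))`. -/
noncomputable def chainMass {K n : ℕ} (ρ : Fin K → ℝ) (Pm : Fin K → Fin K → ℝ)
    (x : Fin n → Fin K) : ℝ :=
  (if h : 0 < n then ρ (x ⟨0, h⟩) else 1) *
    ∏ k : Fin (n - 1),
      Pm (x ⟨k.1, by have := k.2; omega⟩) (x ⟨k.1 + 1, by have := k.2; omega⟩)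

/-- Probability of a set of trajectories under the Markov chain `(Pm, ρ)`. -/
noncomputable def chainProb {K n : ℕ} (ρ : Fin K → ℝ) (Pm : Fin K → Fin K → ℝ)
    (s : Set (Fin n → Fin K)) : ℝ :=
  ∑ x : Fin n → Fin K, if x ∈ s then chainMass ρ Pm x else 0

/-- Expectation of `g` under the Markov chain `(Pm, ρ)`. -/
noncomputable def chainExp {K n : ℕ} (ρ : Fin K → ℝ) (Pm : Fin K → Fin K → ℝ)
    (g : (Fin n → Fin K) → ℝ) : ℝ :=
  ∑ x : Fin n → Fin K, chainMass ρ Pm x * g x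

/-- The nonstationarity index `‖ϱ/π‖_{2,π} = (∑_i ϱ(i)²/π(i))^{1/2}`. -/
noncomputable def nsIndex {K : ℕ} (ϱ π : Fin K → ℝ) : ℝ :=
  Real.sqrt (∑ i, ϱ i ^ 2 / π i)

/-- The empirical measure `π̂_i(x) = (1/n) ∑_{k} 1(x_k = i)`. -/
noncomputable def empMeas {K n : ℕ} (x : Fin n → Fin K) : Fin K → ℝ :=
  fun i => (∑ k : Fin n, if x k = i then (1 : ℝ) else 0) / n

/-- The `ℓ_p` norm on `ℝ^K` (for a real exponent `p ≥ 1`). -/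
noncomputable def lpNorm {K : ℕ} (p : ℝ) (y : Fin K → ℝ) : ℝ :=
  (∑ i, |y i| ^ p) ^ (1 / p)

/-- The Dobrushin (contraction) coefficient `max_{i,j} (1/2) ∑_k |P_{ik} - P_{jk}|`. -/
noncomputable def dobrushin {K : ℕ} (Pm : Fin K → Fin K → ℝ) : ℝ :=
  ⨆ i, ⨆ j, (1 / 2) * ∑ l, |Pm i l - Pm j l|

/-- The `L¹` Wasserstein distance between two probability mass functions on a finite
type, with respect to the cost `d`: the infimum over all couplings of the expected cost. -/
noncomputable def wasserstein1Fin {α : Type*} [Fintype α] (d : α → α → ℝ) (μ ν : α → ℝ) : ℝ :=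
  sInf {c : ℝ | ∃ γ : α → α → ℝ, (∀ a b, 0 ≤ γ a b) ∧ (∀ a, ∑ b, γ a b = μ a) ∧
    (∀ b, ∑ a, γ a b = ν b) ∧ c = ∑ a, ∑ b, γ a b * d a b}

/-- Relative entropy `D(μ‖ν)` between two probability mass functions on a finite type,
valued in `ℝ≥0∞` (it is `∞` unless `μ ≪ ν`). -/
noncomputable def relEntropyFin {α : Type*} [Fintype α] (μ ν : α → ℝ) : ℝ≥0∞ :=
  if ∀ a, ν a = 0 → μ a = 0 then ENNReal.ofReal (∑ a, μ a * Real.log (μ a / ν a)) else ⊤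

/-- The (unweighted) Hamming distance on `Fin n → Fin K`. -/
noncomputable def hammingD {K n : ℕ} (x x' : Fin n → Fin K) : ℝ :=
  ∑ k : Fin n, if x k ≠ x' k then (1 : ℝ) else 0

private lemma mt_poly (t : ℝ) (ht : 0 < t) : 27 * t ≤ (t+2)^3 := by
  nlinarith [sq_nonneg (t-1), ht.le]

private noncomputable def mtPhi (t : ℝ) : ℝ := Real.log t - 3/2 + 27/(2*(t+2)^2)

private lemma mtPhi_hasDeriv {t : ℝ} (ht : 0 < t) :
    HasDerivAt mtPhi (1/t - 27/(t+2)^3) t := by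
  have h2 : (0:ℝ) < t + 2 := by linarith
  have h1 : HasDerivAt Real.log (1/t) t := by
    simpa [one_div] using Real.hasDerivAt_log ht.ne'
  have hq : HasDerivAt (fun t : ℝ => 2*(t+2)^2) (2*(2*(t+2))) t := by
    have : HasDerivAt (fun t : ℝ => (t+2)) 1 t := (hasDerivAt_id t).add_const 2
    simpa [mul_comm] using ((this.pow 2).const_mul 2)
  have hinv : HasDerivAt (fun t : ℝ => 27/(2*(t+2)^2))
      ((0 * (2*(t+2)^2) - 27 * (2*(2*(t+2)))) / (2*(t+2)^2)^2) t :=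
    (hasDerivAt_const t (27:ℝ)).div hq (by positivity)
  have := (h1.sub_const (3/2)).add hinv
  refine (show HasDerivAt mtPhi _ t from this).congr_deriv ?_
  field_simp
  ring

private lemma mtPhi_mono : MonotoneOn mtPhi (Set.Ioi (0:ℝ)) := by
  have hderiv : ∀ t ∈ Set.Ioi (0:ℝ), HasDerivAt mtPhi (1/t - 27/(t+2)^3) t :=
    fun t ht => mtPhi_hasDeriv ht
  have hint : interior (Set.Ioi (0:ℝ)) = Set.Ioi 0 := interior_Ioi
  apply monotoneOn_of_deriv_nonneg (convex_Ioi 0)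
  · intro t ht
    exact (mtPhi_hasDeriv ht).differentiableAt.continuousAt.continuousWithinAt
  · rw [hint]; intro t ht
    exact (mtPhi_hasDeriv ht).differentiableAt.differentiableWithinAt
  · rw [hint]; intro t ht
    rw [(mtPhi_hasDeriv ht).deriv]
    have h2 : (0:ℝ) < t + 2 := by have : (0:ℝ) < t := ht; linarith
    have := mt_poly t ht
    rw [sub_nonneg, div_le_div_iff₀ (by positivity) ht]
    nlinarith

private noncomputable def mtG (t : ℝ) : ℝ := t * Real.log t - t + 1 - 3*(t-1)^2/(2*(t+2))

private lemma mtG_hasDeriv {t : ℝ} (ht : 0 < t) : HasDerivAt mtG (mtPhi t) t := by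
  have h2 : (0:ℝ) < t + 2 := by linarith
  have h1 : HasDerivAt (fun t : ℝ => t * Real.log t) (Real.log t + 1) t := by
    have := (hasDerivAt_id t).mul (Real.hasDerivAt_log ht.ne')
    refine (show HasDerivAt (fun t : ℝ => t * Real.log t) _ t from this).congr_deriv ?_
    simp [mul_inv_cancel₀ ht.ne']
  have hnum : HasDerivAt (fun t : ℝ => 3*(t-1)^2) (3*(2*(t-1))) t := by
    have : HasDerivAt (fun t : ℝ => (t-1)) 1 t := (hasDerivAt_id t).sub_const 1
    simpa [mul_comm] using ((this.pow 2).const_mul 3)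
  have hden : HasDerivAt (fun t : ℝ => 2*(t+2)) 2 t := by
    have : HasDerivAt (fun t : ℝ => (t+2)) 1 t := (hasDerivAt_id t).add_const 2
    simpa using this.const_mul 2
  have hq : HasDerivAt (fun t : ℝ => 3*(t-1)^2/(2*(t+2)))
      ((3*(2*(t-1)) * (2*(t+2)) - 3*(t-1)^2 * 2) / (2*(t+2))^2) t :=
    hnum.div hden (by positivity)
  have := ((h1.sub (hasDerivAt_id t)).add_const 1).sub hq
  refine (show HasDerivAt mtG _ t from this).congr_deriv ?_
  unfold mtPhi
  field_simp
  ring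

private lemma mtG_nonneg {t : ℝ} (ht : 0 ≤ t) : 0 ≤ mtG t := by
  rcases eq_or_lt_of_le ht with h|h
  · simp [mtG, ← h, Real.log_zero]; norm_num
  have hG1 : mtG 1 = 0 := by norm_num [mtG]
  have hphi1 : mtPhi 1 = 0 := by norm_num [mtPhi]
  rcases le_total 1 t with h1|h1
  · -- monotone on [1, t]
    have hmono : MonotoneOn mtG (Set.Icc 1 t) := by
      apply monotoneOn_of_deriv_nonneg (convex_Icc 1 t)
      · intro s hs
        exact (mtG_hasDeriv (by simp at hs; linarith [hs.1])).differentiableAt.continuousAt.continuousWithinAt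
      · rw [interior_Icc]; intro s hs
        exact (mtG_hasDeriv (by simp at hs; linarith [hs.1])).differentiableAt.differentiableWithinAt
      · rw [interior_Icc]; intro s hs
        simp at hs
        rw [(mtG_hasDeriv (by linarith [hs.1])).deriv]
        rw [← hphi1]
        exact mtPhi_mono (by norm_num) (by simp; linarith [hs.1]) hs.1.le
    have := hmono (Set.left_mem_Icc.2 h1) (Set.right_mem_Icc.2 h1) h1
    rw [hG1] at this; exact this
  · -- antitone on [t, 1]
    have hmono : AntitoneOn mtG (Set.Icc t 1) := by
      apply antitoneOn_of_deriv_nonpos (convex_Icc t 1)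
      · intro s hs
        exact (mtG_hasDeriv (by simp at hs; linarith [hs.1])).differentiableAt.continuousAt.continuousWithinAt
      · rw [interior_Icc]; intro s hs
        exact (mtG_hasDeriv (by simp at hs; linarith [hs.1])).differentiableAt.differentiableWithinAt
      · rw [interior_Icc]; intro s hs
        simp at hs
        rw [(mtG_hasDeriv (by linarith)).deriv]
        rw [← hphi1]
        exact mtPhi_mono (by simp; linarith) (by norm_num) hs.2.le
    have := hmono (Set.left_mem_Icc.2 h1) (Set.right_mem_Icc.2 h1) h1
    rw [hG1] at this; exact this

/-- Key pointwise bound: `3(t-1)² ≤ 2(t+2)(t log t - t + 1)` for `t ≥ 0`. -/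
private lemma mt_key (t : ℝ) (ht : 0 ≤ t) :
    3*(t-1)^2 ≤ 2*(t+2) * (t * Real.log t - t + 1) := by
  have h2 : (0:ℝ) < t + 2 := by linarith
  have := mtG_nonneg ht
  unfold mtG at this
  rw [sub_nonneg, div_le_iff₀ (by positivity)] at this
  linarith [this]

/-- Scaled version: `3(x-y)² ≤ 2(x+2y)(x log(x/y) - x + y)`. -/
private lemma mt_key' (x y : ℝ) (hx : 0 ≤ x) (hy : 0 ≤ y) (h0 : y = 0 → x = 0) :
    3*(x-y)^2 ≤ 2*(x+2*y) * (x * Real.log (x/y) - x + y) := by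
  rcases eq_or_lt_of_le hy with h|hy'
  · rw [h0 h.symm, ← h]; norm_num
  have hyne : y ≠ 0 := hy'.ne'
  have key := mt_key (x/y) (by positivity)
  calc 3*(x-y)^2 = y^2 * (3*((x/y)-1)^2) := by field_simp; try ring
    _ ≤ y^2 * (2*((x/y)+2) * ((x/y) * Real.log (x/y) - (x/y) + 1)) :=
        mul_le_mul_of_nonneg_left key (sq_nonneg y)
    _ = 2*(x+2*y) * (x * Real.log (x/y) - x + y) := by field_simp; try ring

variable {α : Type*} [Fintype α]

/-- Generic finite KL divergence. -/
private noncomputable def klG (μ ν : α → ℝ) : ℝ := ∑ a, μ a * Real.log (μ a / ν a)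

private lemma mt_pt_nonneg (x y : ℝ) (hx : 0 ≤ x) (hy : 0 ≤ y) (h0 : y = 0 → x = 0) :
    0 ≤ x * Real.log (x/y) - x + y := by
  rcases eq_or_lt_of_le hy with h|hy'
  · rw [h0 h.symm, ← h]; norm_num
  rcases eq_or_lt_of_le hx with h|hx'
  · rw [← h]; simpa using hy
  have h1 : Real.log (y/x) ≤ y/x - 1 := Real.log_le_sub_one_of_pos (by positivity)
  have h2 : Real.log (x/y) = - Real.log (y/x) := by
    rw [← Real.log_inv]; congr 1; field_simp
  nlinarith [mul_le_mul_of_nonneg_left h1 hx, mul_pos hx' hy',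
    (div_mul_cancel₀ y hx'.ne').symm, mul_div_assoc y x x]

private lemma klG_nonneg (μ ν : α → ℝ) (hμ : ∀ a, 0 ≤ μ a) (hν : ∀ a, 0 ≤ ν a)
    (hTμ : ∑ a, μ a = 1) (hTν : ∑ a, ν a = 1) (hac : ∀ a, ν a = 0 → μ a = 0) :
    0 ≤ klG μ ν := by
  have h : ∀ a, μ a - ν a ≤ μ a * Real.log (μ a / ν a) := by
    intro a
    have := mt_pt_nonneg (μ a) (ν a) (hμ a) (hν a) (hac a)
    linarith
  calc (0:ℝ) = ∑ a, (μ a - ν a) := by rw [Finset.sum_sub_distrib, hTμ, hTν]; ring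
    _ ≤ klG μ ν := Finset.sum_le_sum (fun a _ => h a)

/-- Pinsker's inequality, squared form. -/
private lemma pinsker_sq (μ ν : α → ℝ) (hμ : ∀ a, 0 ≤ μ a) (hν : ∀ a, 0 ≤ ν a)
    (hTμ : ∑ a, μ a = 1) (hTν : ∑ a, ν a = 1) (hac : ∀ a, ν a = 0 → μ a = 0) :
    (∑ a, |μ a - ν a|)^2 ≤ 2 * klG μ ν := by
  set w : α → ℝ := fun a => (μ a + 2 * ν a)/3 with hw
  have hwnn : ∀ a, 0 ≤ w a := fun a => by have := hμ a; have := hν a; positivity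
  set f : α → ℝ := fun a => Real.sqrt (w a)
  set g : α → ℝ := fun a => if w a = 0 then 0 else |μ a - ν a| / Real.sqrt (w a)
  have hfg : ∀ a, |μ a - ν a| = f a * g a := by
    intro a
    by_cases h : w a = 0
    · have hμ0 : μ a = 0 := by have := hμ a; have := hν a; simp [hw] at h; linarith
      have hν0 : ν a = 0 := by have := hμ a; have := hν a; simp [hw] at h; linarith
      simp [f, g, h, hμ0, hν0]
    · have : Real.sqrt (w a) ≠ 0 := by
        simpa using (Real.sqrt_ne_zero (hwnn a)).2 h
      field_simp [f, g, h]
      simp only [f, g, if_neg h]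
      field_simp
  have hCS := Finset.sum_mul_sq_le_sq_mul_sq Finset.univ f g
  have hf2 : ∑ a, f a ^ 2 = 1 := by
    have : ∀ a, f a ^ 2 = w a := fun a => Real.sq_sqrt (hwnn a)
    rw [Finset.sum_congr rfl (fun a _ => this a)]
    simp only [hw]
    rw [← Finset.sum_div, Finset.sum_add_distrib, hTμ, ← Finset.mul_sum, hTν]
    norm_num
  have hg2 : ∑ a, g a ^ 2 ≤ 2 * klG μ ν := by
    have hpt : ∀ a, g a ^ 2 ≤ 2 * (μ a * Real.log (μ a / ν a) - μ a + ν a) := by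
      intro a
      by_cases h : w a = 0
      · simp only [g, h, if_true]
        simpa using mt_pt_nonneg (μ a) (ν a) (hμ a) (hν a) (hac a)
      · have hwpos : 0 < w a := lt_of_le_of_ne (hwnn a) (Ne.symm h)
        have hkey := mt_key' (μ a) (ν a) (hμ a) (hν a) (hac a)
        simp only [g, h, if_false]
        rw [div_pow, Real.sq_sqrt (hwnn a), div_le_iff₀ hwpos, sq_abs]
        simp only [hw]
        nlinarith [hkey]
    calc ∑ a, g a ^ 2 ≤ ∑ a, 2 * (μ a * Real.log (μ a / ν a) - μ a + ν a) :=
          Finset.sum_le_sum (fun a _ => hpt a)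
      _ = 2 * klG μ ν := by
          rw [← Finset.mul_sum]
          congr 1
          have : ∑ i, (μ i * Real.log (μ i / ν i) - μ i + ν i)
              = klG μ ν - (∑ i, μ i) + (∑ i, ν i) := by
            rw [klG, Finset.sum_add_distrib, Finset.sum_sub_distrib]
          rw [this, hTμ, hTν]; ring
  calc (∑ a, |μ a - ν a|)^2 = (∑ a, f a * g a)^2 := by
        rw [Finset.sum_congr rfl (fun a _ => hfg a)]
    _ ≤ (∑ a, f a ^ 2) * (∑ a, g a ^ 2) := hCS
    _ = ∑ a, g a ^ 2 := by rw [hf2, one_mul]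
    _ ≤ 2 * klG μ ν := hg2

private lemma pinsker_half (μ ν : α → ℝ) (hμ : ∀ a, 0 ≤ μ a) (hν : ∀ a, 0 ≤ ν a)
    (hTμ : ∑ a, μ a = 1) (hTν : ∑ a, ν a = 1) (hac : ∀ a, ν a = 0 → μ a = 0) :
    (1/2) * ∑ a, |μ a - ν a| ≤ Real.sqrt (klG μ ν / 2) := by
  have hS : 0 ≤ ∑ a, |μ a - ν a| := Finset.sum_nonneg (fun a _ => abs_nonneg _)
  have h := pinsker_sq μ ν hμ hν hTμ hTν hac
  have : ((1/2) * ∑ a, |μ a - ν a|)^2 ≤ klG μ ν / 2 := by nlinarith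
  calc (1/2) * ∑ a, |μ a - ν a|
      = Real.sqrt (((1/2) * ∑ a, |μ a - ν a|)^2) := by
        rw [Real.sqrt_sq (by positivity)]
    _ ≤ Real.sqrt (klG μ ν / 2) := Real.sqrt_le_sqrt this

private lemma exists_maximal_coupling [DecidableEq α] (p q : α → ℝ) (hp : ∀ a, 0 ≤ p a) (hq : ∀ a, 0 ≤ q a)
    (hTp : ∑ a, p a = 1) (hTq : ∑ a, q a = 1) :
    ∃ θ : α → α → ℝ, (∀ a b, 0 ≤ θ a b) ∧ (∀ a, ∑ b, θ a b = p a) ∧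
      (∀ b, ∑ a, θ a b = q b) ∧
      ∑ a, ∑ b, θ a b * (if a = b then 0 else 1) ≤ (1/2) * ∑ a, |p a - q a| := by
  classical
  set u : α → ℝ := fun a => min (p a) (q a) with hu
  set Δ : ℝ := ∑ a, (p a - u a) with hΔ
  have hunn : ∀ a, 0 ≤ u a := fun a => le_min (hp a) (hq a)
  have hpu : ∀ a, 0 ≤ p a - u a := fun a => by simp [hu]
  have hqu : ∀ a, 0 ≤ q a - u a := fun a => by simp [hu]
  have hpt : ∀ a, p a - u a = (|p a - q a| + (p a - q a))/2 := by
    intro a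
    rcases le_total (p a) (q a) with h|h
    · rw [abs_of_nonpos (by linarith)]
      simp [hu, min_eq_left h]
      try linarith
    · rw [abs_of_nonneg (by linarith)]
      simp [hu, min_eq_right h]
      try linarith
  have hΔeq : Δ = (1/2) * ∑ a, |p a - q a| := by
    rw [hΔ, Finset.sum_congr rfl (fun a _ => hpt a)]
    have : ∑ a, (|p a - q a| + (p a - q a))/2
        = ((∑ a, |p a - q a|) + ((∑ a, p a) - ∑ a, q a))/2 := by
      rw [← Finset.sum_div, Finset.sum_add_distrib, Finset.sum_sub_distrib]
    rw [this, hTp, hTq]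
    ring
  have hΔeq2 : ∑ a, (q a - u a) = Δ := by
    rw [hΔ, Finset.sum_sub_distrib, Finset.sum_sub_distrib, hTp, hTq]
  have hΔnn : 0 ≤ Δ := Finset.sum_nonneg (fun a _ => hpu a)
  rcases eq_or_lt_of_le hΔnn with hΔ0|hΔpos
  · -- p = q, use the diagonal coupling
    have hpq : ∀ a, p a = q a := by
      intro a
      have h0 : ∑ a, |p a - q a| = 0 := by
        have : (1/2 : ℝ) * ∑ a, |p a - q a| = 0 := by rw [← hΔeq, ← hΔ0]
        linarith
      have := (Finset.sum_eq_zero_iff_of_nonneg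
        (fun a _ => abs_nonneg (p a - q a))).1 h0 a (Finset.mem_univ a)
      have := abs_eq_zero.1 this
      linarith
    refine ⟨fun a b => if a = b then p a else 0, ?_, ?_, ?_, ?_⟩
    · intro a b; dsimp only; split <;> simp [hp a]
    · intro a; simp
    · intro b; rw [Finset.sum_ite_eq' Finset.univ b p]; simp [hpq b]
    · have h0 : ∀ a, ∑ b, (if a = b then p a else 0) * (if a = b then 0 else 1) = 0 := by
        intro a
        apply Finset.sum_eq_zero
        intro b _
        split <;> simp
      rw [Finset.sum_congr rfl (fun a _ => h0 a), Finset.sum_const_zero]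
      positivity
  · refine ⟨fun a b => (if a = b then u a else 0) + (p a - u a) * (q b - u b) / Δ,
      ?_, ?_, ?_, ?_⟩
    · intro a b
      have h1 : 0 ≤ (p a - u a) * (q b - u b) / Δ := by
        have := hpu a; have := hqu b; positivity
      dsimp only; split <;> [linarith [hunn a]; linarith]
    · intro a
      rw [Finset.sum_add_distrib]
      rw [Finset.sum_ite_eq Finset.univ a (fun _ => u a)]
      simp only [Finset.mem_univ, if_true]
      rw [Finset.sum_congr rfl (fun b _ => show (p a - u a) * (q b - u b) / Δ
        = (p a - u a)/Δ * (q b - u b) from by ring), ← Finset.mul_sum, hΔeq2,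
        div_mul_cancel₀ _ hΔpos.ne']
      linarith
    · intro b
      rw [Finset.sum_add_distrib]
      rw [Finset.sum_ite_eq' Finset.univ b u]
      simp only [Finset.mem_univ, if_true]
      rw [Finset.sum_congr rfl (fun a _ => show (p a - u a) * (q b - u b) / Δ
        = (q b - u b)/Δ * (p a - u a) from by ring), ← Finset.mul_sum, ← hΔ,
        div_mul_cancel₀ _ hΔpos.ne']
      linarith
    · calc ∑ a, ∑ b, ((if a = b then u a else 0) + (p a - u a) * (q b - u b) / Δ)
            * (if a = b then 0 else 1)
          ≤ ∑ a, ∑ b, (p a - u a) * (q b - u b) / Δ := by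
            apply Finset.sum_le_sum; intro a _
            apply Finset.sum_le_sum; intro b _
            have h1 : 0 ≤ (p a - u a) * (q b - u b) / Δ := by
              have := hpu a; have := hqu b; positivity
            by_cases hab : a = b
            · subst hab; simp
              have := hpu a; have := hqu a; positivity
            · simp [hab]
        _ = Δ := by
            rw [Finset.sum_congr rfl (fun a _ => show
              ∑ b, (p a - u a) * (q b - u b) / Δ = p a - u a from by
                rw [Finset.sum_congr rfl (fun b _ => show (p a - u a) * (q b - u b) / Δ
                  = (p a - u a)/Δ * (q b - u b) from by ring), ← Finset.mul_sum, hΔeq2,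
                  div_mul_cancel₀ _ hΔpos.ne']), ← hΔ]
        _ = (1/2) * ∑ a, |p a - q a| := hΔeq


lemma sum_cons_decomp {K n : ℕ} (F : (Fin (n+1) → Fin K) → ℝ) :
    ∑ x : Fin (n+1) → Fin K, F x = ∑ a : Fin K, ∑ z : Fin n → Fin K, F (Fin.cons a z) := by
  rw [← (Fin.consEquiv (fun _ : Fin (n+1) => Fin K)).sum_comp F]
  rw [Fintype.sum_prod_type]
  rfl

lemma chainMass_cons {K n : ℕ} (ρ : Fin K → ℝ) (Pm : Fin K → Fin K → ℝ) (a : Fin K)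
    (z : Fin n → Fin K) :
    chainMass ρ Pm (Fin.cons a z) = ρ a * chainMass (Pm a) Pm z := by
  unfold chainMass
  cases n with
  | zero => simp
  | succ m =>
    simp only [Nat.succ_pos, dif_pos, Nat.succ_sub_one]
    rw [Fin.prod_univ_succ]
    have h0 : (Fin.cons a z : Fin (m+2) → Fin K) ⟨0, by omega⟩ = a := rfl
    have hs : ∀ (j : ℕ) (h : j + 1 < m + 2),
        (Fin.cons a z : Fin (m+2) → Fin K) ⟨j+1, h⟩ = z ⟨j, by omega⟩ := fun j h => rfl
    rw [h0]
    congr 1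


lemma chainMass_nonneg {K n : ℕ} {ρ : Fin K → ℝ} {Pm : Fin K → Fin K → ℝ}
    (hρ : ∀ i, 0 ≤ ρ i) (hP : ∀ i j, 0 ≤ Pm i j) (x : Fin n → Fin K) :
    0 ≤ chainMass ρ Pm x := by
  unfold chainMass
  apply mul_nonneg
  · split <;> [exact hρ _; norm_num]
  · exact Finset.prod_nonneg (fun k _ => hP _ _)

lemma chainMass_sum {K n : ℕ} (ρ : Fin K → ℝ) (Pm : Fin K → Fin K → ℝ)
    (hρ : ∑ i, ρ i = 1) (hP : ∀ i, ∑ j, Pm i j = 1) :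
    ∑ x : Fin n → Fin K, chainMass ρ Pm x = 1 := by
  induction n generalizing ρ with
  | zero =>
    have h1 : ∀ x : Fin 0 → Fin K, chainMass ρ Pm x = 1 := fun x => by simp [chainMass]
    rw [Finset.sum_congr rfl (fun x _ => h1 x), Finset.sum_const]
    simp
  | succ m ih =>
    rw [sum_cons_decomp]
    have : ∀ a : Fin K, ∑ z : Fin m → Fin K, chainMass ρ Pm (Fin.cons a z) = ρ a := by
      intro a
      rw [Finset.sum_congr rfl (fun z _ => chainMass_cons ρ Pm a z), ← Finset.mul_sum,
        ih (Pm a) (hP a), mul_one]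
    rw [Finset.sum_congr rfl (fun a _ => this a), hρ]

lemma hammingD_cons {K n : ℕ} (a b : Fin K) (z w : Fin n → Fin K) :
    hammingD (Fin.cons a z) (Fin.cons b w) = (if a = b then 0 else 1) + hammingD z w := by
  unfold hammingD
  rw [Fin.sum_univ_succ]
  simp only [Fin.cons_zero, Fin.cons_succ]
  congr 1
  by_cases h : a = b <;> simp [h]

lemma hammingD_nonneg {K n : ℕ} (x x' : Fin n → Fin K) : 0 ≤ hammingD x x' :=
  Finset.sum_nonneg (fun k _ => by split <;> norm_num)

lemma le_dobrushin {K : ℕ} (Pm : Fin K → Fin K → ℝ) (i j : Fin K) :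
    (1/2) * ∑ l, |Pm i l - Pm j l| ≤ dobrushin Pm := by
  unfold dobrushin
  have h1 : ∀ i : Fin K, BddAbove (Set.range fun j => (1/2 : ℝ) * ∑ l, |Pm i l - Pm j l|) :=
    fun i => (Set.finite_range _).bddAbove
  have h2 : BddAbove (Set.range fun i => ⨆ j, (1/2 : ℝ) * ∑ l, |Pm i l - Pm j l|) :=
    (Set.finite_range _).bddAbove
  calc (1/2 : ℝ) * ∑ l, |Pm i l - Pm j l| ≤ ⨆ j, (1/2 : ℝ) * ∑ l, |Pm i l - Pm j l| :=
        le_ciSup (h1 i) j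
    _ ≤ ⨆ i, ⨆ j, (1/2 : ℝ) * ∑ l, |Pm i l - Pm j l| := le_ciSup h2 i

lemma dobrushin_nonneg {K : ℕ} (hK : 0 < K) (Pm : Fin K → Fin K → ℝ) :
    0 ≤ dobrushin Pm := by
  have i : Fin K := ⟨0, hK⟩
  have := le_dobrushin Pm i i
  simpa using this

private lemma sqrt_comb (a b : ℝ) (n : ℕ) (ha : 0 ≤ a) (hb : 0 ≤ b) :
    Real.sqrt (a/2) + Real.sqrt (n*b/2) ≤ Real.sqrt ((n+1)*(a+b)/2) := by
  have hA := Real.sq_sqrt (show (0:ℝ) ≤ a/2 by linarith)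
  have hB := Real.sq_sqrt (show (0:ℝ) ≤ (n:ℝ)*b/2 by positivity)
  have hC := Real.sq_sqrt (show (0:ℝ) ≤ ((n:ℝ)+1)*(a+b)/2 by positivity)
  have hAB : Real.sqrt (a/2) * Real.sqrt ((n:ℝ)*b/2)
      = Real.sqrt ((n:ℝ)*a/2) * Real.sqrt (b/2) := by
    rw [← Real.sqrt_mul (by linarith), ← Real.sqrt_mul (by positivity)]
    congr 1
    ring
  have h1 := Real.sq_sqrt (show (0:ℝ) ≤ (n:ℝ)*a/2 by positivity)
  have h2 := Real.sq_sqrt (show (0:ℝ) ≤ b/2 by linarith)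
  have h3 := sq_nonneg (Real.sqrt ((n:ℝ)*a/2) - Real.sqrt (b/2))
  have h4 : 0 ≤ Real.sqrt (a/2) := Real.sqrt_nonneg _
  have h5 : 0 ≤ Real.sqrt ((n:ℝ)*b/2) := Real.sqrt_nonneg _
  have h6 : 0 ≤ Real.sqrt (((n:ℝ)+1)*(a+b)/2) := Real.sqrt_nonneg _
  nlinarith [sq_nonneg (Real.sqrt (a/2) + Real.sqrt ((n:ℝ)*b/2) - Real.sqrt (((n:ℝ)+1)*(a+b)/2))]


section Main
variable {K : ℕ}

lemma marton (hK : 0 < K) (Pm : Fin K → Fin K → ℝ)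
    (hPnn : ∀ i j, 0 ≤ Pm i j) (hProw : ∀ i, ∑ j, Pm i j = 1)
    (r : ℝ) (hrd : ∀ i j, (1/2) * ∑ l, |Pm i l - Pm j l| ≤ r) (hr : r < 1) :
    ∀ (n : ℕ) (μ : (Fin n → Fin K) → ℝ) (ρ ρ' : Fin K → ℝ),
    (∀ x, 0 ≤ μ x) → (∑ x, μ x = 1) →
    (∀ i, 0 ≤ ρ i) → (∑ i, ρ i = 1) → (∀ i, 0 ≤ ρ' i) → (∑ i, ρ' i = 1) →
    (∀ x, chainMass ρ Pm x = 0 → μ x = 0) →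
    ∃ γ : (Fin n → Fin K) → (Fin n → Fin K) → ℝ,
      (∀ x y, 0 ≤ γ x y) ∧ (∀ x, ∑ y, γ x y = μ x) ∧
      (∀ y, ∑ x, γ x y = chainMass ρ' Pm y) ∧
      ∑ x, ∑ y, γ x y * hammingD x y ≤
        (1/(1-r)) * (Real.sqrt (n * klG μ (chainMass ρ Pm) / 2)
          + (1/2) * ∑ i, |ρ i - ρ' i|) := by
  have hr1 : 0 < 1 - r := by linarith
  have hr0 : 0 ≤ r := le_trans (by simp [abs_nonneg, Finset.sum_nonneg]
    : (0:ℝ) ≤ (1/2) * ∑ l, |Pm ⟨0,hK⟩ l - Pm ⟨0,hK⟩ l|) (hrd ⟨0,hK⟩ ⟨0,hK⟩)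
  intro n
  induction n with
  | zero =>
    intro μ ρ ρ' hμnn hμs hρnn hρs hρ'nn hρ's hac
    refine ⟨fun _ _ => 1, fun _ _ => by norm_num, ?_, ?_, ?_⟩
    · intro x
      have hu : ∀ y : Fin 0 → Fin K, y = x := fun y => funext (fun i => i.elim0)
      have h1 : μ x = 1 := by
        rw [← hμs]
        symm
        apply Finset.sum_eq_single_of_mem x (Finset.mem_univ x)
        intro b _ hbx; exact absurd (hu b) hbx
      rw [Finset.sum_const, h1]
      have : Fintype.card (Fin 0 → Fin K) = 1 := by simp
      rw [Finset.card_univ, this]; norm_num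
    · intro y
      have h1 : chainMass ρ' Pm y = 1 := by simp [chainMass]
      rw [Finset.sum_const, h1]
      have : Fintype.card (Fin 0 → Fin K) = 1 := by simp
      rw [Finset.card_univ, this]; norm_num
    · have h0 : ∀ x y : Fin 0 → Fin K, hammingD x y = 0 := fun x y => by
        simp [hammingD]
      rw [Finset.sum_congr rfl (fun x _ => Finset.sum_congr rfl
        (fun y _ => by rw [h0 x y, mul_zero]))]
      simp only [Finset.sum_const_zero]
      have h2 : 0 ≤ Real.sqrt ((0:ℕ) * klG μ (chainMass ρ Pm) / 2) := Real.sqrt_nonneg _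
      have h3 : 0 ≤ (1/2) * ∑ i, |ρ i - ρ' i| := by
        apply mul_nonneg (by norm_num)
        exact Finset.sum_nonneg (fun i _ => abs_nonneg _)
      positivity
  | succ n ih =>
    intro μ ρ ρ' hμnn hμs hρnn hρs hρ'nn hρ's hac
    set ν : (Fin (n+1) → Fin K) → ℝ := chainMass ρ Pm with hν
    set νc : Fin K → (Fin n → Fin K) → ℝ := fun a => chainMass (Pm a) Pm with hνc
    set μ0 : Fin K → ℝ := fun a => ∑ z, μ (Fin.cons a z) with hμ0
    set μc : Fin K → (Fin n → Fin K) → ℝ :=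
      fun a z => if μ0 a = 0 then νc a z else μ (Fin.cons a z) / μ0 a with hμc
    -- basic facts
    have hμ0nn : ∀ a, 0 ≤ μ0 a := fun a => Finset.sum_nonneg (fun z _ => hμnn _)
    have hμ0s : ∑ a, μ0 a = 1 := by rw [← sum_cons_decomp μ] at *; exact hμs
    have hμzero : ∀ a, μ0 a = 0 → ∀ z, μ (Fin.cons a z) = 0 := by
      intro a ha z
      exact (Finset.sum_eq_zero_iff_of_nonneg (fun z _ => hμnn _)).1 ha z (Finset.mem_univ z)
    have hμeq : ∀ a z, μ (Fin.cons a z) = μ0 a * μc a z := by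
      intro a z
      by_cases h : μ0 a = 0
      · rw [hμzero a h z, h, zero_mul]
      · simp only [hμc, if_neg h]
        rw [mul_div_cancel₀ _ h]
    have hνcnn : ∀ a z, 0 ≤ νc a z := fun a z => chainMass_nonneg (hPnn a) hPnn z
    have hνcs : ∀ a, ∑ z, νc a z = 1 := fun a => chainMass_sum (Pm a) Pm (hProw a) hProw
    have hνcons : ∀ a z, ν (Fin.cons a z) = ρ a * νc a z := fun a z => chainMass_cons ρ Pm a z
    have hacν : ∀ a z, νc a z = 0 → μ (Fin.cons a z) = 0 := by
      intro a z h
      apply hac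
      rw [hνcons a z, h, mul_zero]
    have hμ0ac : ∀ a, ρ a = 0 → μ0 a = 0 := by
      intro a ha
      apply Finset.sum_eq_zero
      intro z _
      apply hac
      rw [hνcons a z, ha, zero_mul]
    have hμcnn : ∀ a z, 0 ≤ μc a z := by
      intro a z
      simp only [hμc]
      split
      · exact hνcnn a z
      · exact div_nonneg (hμnn _) (hμ0nn a)
    have hμcs : ∀ a, ∑ z, μc a z = 1 := by
      intro a
      by_cases h : μ0 a = 0
      · simp only [hμc, if_pos h]; exact hνcs a
      · simp only [hμc, if_neg h]
        rw [← Finset.sum_div]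
        exact div_self h
    have hμcac : ∀ a z, νc a z = 0 → μc a z = 0 := by
      intro a z h
      simp only [hμc]
      split
      · exact h
      · rw [hacν a z h, zero_div]
    -- one-step chain rule
    have hchain : klG μ ν = klG μ0 ρ + ∑ a, μ0 a * klG (μc a) (νc a) := by
      have h1 : klG μ ν = ∑ a, ∑ z,
          μ (Fin.cons a z) * Real.log (μ (Fin.cons a z) / ν (Fin.cons a z)) :=
        sum_cons_decomp (fun x => μ x * Real.log (μ x / ν x))
      have h2 : ∀ a, ∑ z, μ (Fin.cons a z) * Real.log (μ (Fin.cons a z) / ν (Fin.cons a z))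
          = μ0 a * Real.log (μ0 a / ρ a) + μ0 a * klG (μc a) (νc a) := by
        intro a
        by_cases h : μ0 a = 0
        · rw [h, zero_mul, zero_mul, add_zero]
          apply Finset.sum_eq_zero
          intro z _
          rw [hμzero a h z, zero_mul]
        · have hρa : ρ a ≠ 0 := fun hh => h (hμ0ac a hh)
          have hμ0pos : 0 < μ0 a := lt_of_le_of_ne (hμ0nn a) (Ne.symm h)
          have hρpos : 0 < ρ a := lt_of_le_of_ne (hρnn a) (Ne.symm hρa)
          have hpt : ∀ z, μ (Fin.cons a z) * Real.log (μ (Fin.cons a z) / ν (Fin.cons a z))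
              = μ0 a * Real.log (μ0 a / ρ a) * μc a z
                + μ0 a * (μc a z * Real.log (μc a z / νc a z)) := by
            intro z
            by_cases hz : μc a z = 0
            · rw [hμeq a z, hz]
              simp
            · have hμpos : 0 < μc a z := lt_of_le_of_ne (hμcnn a z) (Ne.symm hz)
              have hνcz : νc a z ≠ 0 := fun hh => hz (hμcac a z hh)
              have hνcpos : 0 < νc a z := lt_of_le_of_ne (hνcnn a z) (Ne.symm hνcz)
              rw [hμeq a z, hνcons a z]
              have harg : (μ0 a * μc a z) / (ρ a * νc a z)
                  = (μ0 a / ρ a) * (μc a z / νc a z) := (div_mul_div_comm _ _ _ _).symm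
              rw [harg, Real.log_mul (by positivity) (by positivity)]
              ring
          rw [Finset.sum_congr rfl (fun z _ => hpt z), Finset.sum_add_distrib,
            ← Finset.mul_sum, hμcs a, mul_one, ← Finset.mul_sum]
          rfl
      rw [h1, Finset.sum_congr rfl (fun a _ => h2 a), Finset.sum_add_distrib]
      rfl
    have hDnn : ∀ a, 0 ≤ klG (μc a) (νc a) := fun a =>
      klG_nonneg _ _ (hμcnn a) (hνcnn a) (hμcs a) (hνcs a) (hμcac a)
    have hd0nn : 0 ≤ klG μ0 ρ := klG_nonneg _ _ hμ0nn hρnn hμ0s hρs hμ0ac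
    set S : ℝ := ∑ a, μ0 a * klG (μc a) (νc a) with hSdef
    have hSnn : 0 ≤ S :=
      Finset.sum_nonneg (fun a _ => mul_nonneg (hμ0nn a) (hDnn a))
    -- maximal coupling of the first coordinate
    obtain ⟨θ, hθnn, hθrow, hθcol, hθcost⟩ :=
      exists_maximal_coupling μ0 ρ' hμ0nn hρ'nn hμ0s hρ's
    -- inductive couplings
    choose G hGnn hGrow hGcol hGcost using fun a b =>
      ih (μc a) (Pm a) (Pm b) (hμcnn a) (hμcs a) (hPnn a) (hProw a) (hPnn b)
        (hProw b) (hμcac a)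
    refine ⟨fun x y => θ (x 0) (y 0) * G (x 0) (y 0) (Fin.tail x) (Fin.tail y),
      ?_, ?_, ?_, ?_⟩
    · intro x y
      exact mul_nonneg (hθnn _ _) (hGnn _ _ _ _)
    · intro x
      rw [sum_cons_decomp (fun y => θ (x 0) (y 0) * G (x 0) (y 0) (Fin.tail x) (Fin.tail y))]
      simp only [Fin.cons_zero, Fin.tail_cons]
      have h1 : ∀ b, ∑ w, θ (x 0) b * G (x 0) b (Fin.tail x) w
          = θ (x 0) b * μc (x 0) (Fin.tail x) := fun b => by
        rw [← Finset.mul_sum, hGrow (x 0) b (Fin.tail x)]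
      rw [Finset.sum_congr rfl (fun b _ => h1 b), ← Finset.sum_mul, hθrow (x 0),
        ← hμeq (x 0) (Fin.tail x), Fin.cons_self_tail]
    · intro y
      rw [sum_cons_decomp (fun x => θ (x 0) (y 0) * G (x 0) (y 0) (Fin.tail x) (Fin.tail y))]
      simp only [Fin.cons_zero, Fin.tail_cons]
      have h1 : ∀ a, ∑ z, θ a (y 0) * G a (y 0) z (Fin.tail y)
          = θ a (y 0) * νc (y 0) (Fin.tail y) := fun a => by
        rw [Finset.sum_congr rfl (fun z _ => show θ a (y 0) * G a (y 0) z (Fin.tail y)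
          = θ a (y 0) * G a (y 0) z (Fin.tail y) from rfl), ← Finset.mul_sum,
          hGcol a (y 0) (Fin.tail y)]
      rw [Finset.sum_congr rfl (fun a _ => h1 a), ← Finset.sum_mul, hθcol (y 0)]
      rw [show chainMass ρ' Pm y = chainMass ρ' Pm (Fin.cons (y 0) (Fin.tail y)) from by
        rw [Fin.cons_self_tail], chainMass_cons]
    · -- the cost bound
      set cG : Fin K → Fin K → ℝ := fun a b => ∑ z, ∑ w, G a b z w * hammingD z w with hcG
      set T' : ℝ := ∑ a, ∑ b, θ a b * (if a = b then 0 else 1) with hT'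
      have hGsum : ∀ a b, ∑ z, ∑ w, G a b z w = 1 := by
        intro a b
        rw [Finset.sum_congr rfl (fun z _ => hGrow a b z), hμcs a]
      have hLHS : ∑ x, ∑ y, θ (x 0) (y 0) * G (x 0) (y 0) (Fin.tail x) (Fin.tail y)
            * hammingD x y
          = T' + ∑ a, ∑ b, θ a b * cG a b := by
        rw [sum_cons_decomp (fun x => ∑ y, θ (x 0) (y 0)
          * G (x 0) (y 0) (Fin.tail x) (Fin.tail y) * hammingD x y)]
        simp only [Fin.cons_zero, Fin.tail_cons]
        have h1 : ∀ (a : Fin K) (z : Fin n → Fin K), ∑ y : Fin (n+1) → Fin K,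
            θ a (y 0) * G a (y 0) z (Fin.tail y) * hammingD (Fin.cons a z) y
            = ∑ b, ∑ w, θ a b * G a b z w
              * ((if a = b then 0 else 1) + hammingD z w) := by
          intro a z
          rw [sum_cons_decomp (fun y => θ a (y 0) * G a (y 0) z (Fin.tail y)
            * hammingD (Fin.cons a z) y)]
          simp only [Fin.cons_zero, Fin.tail_cons]
          exact Finset.sum_congr rfl (fun b _ => Finset.sum_congr rfl (fun w _ => by
            rw [hammingD_cons]))
        rw [Finset.sum_congr rfl (fun a _ => Finset.sum_congr rfl (fun z _ => h1 a z))]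
        have h2 : ∀ a, ∑ z, ∑ b, ∑ w, θ a b * G a b z w
              * ((if a = b then 0 else 1) + hammingD z w)
            = ∑ b, ∑ z, ∑ w, θ a b * G a b z w
              * ((if a = b then 0 else 1) + hammingD z w) := fun a => Finset.sum_comm
        rw [Finset.sum_congr rfl (fun a _ => h2 a)]
        have h3 : ∀ a b, ∑ z, ∑ w, θ a b * G a b z w
              * ((if a = b then 0 else 1) + hammingD z w)
            = θ a b * (if a = b then 0 else 1) + θ a b * cG a b := by
          intro a b
          have hpt : ∀ z w, θ a b * G a b z w * ((if a = b then 0 else 1) + hammingD z w)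
              = θ a b * (if a = b then 0 else 1) * G a b z w
                + θ a b * (G a b z w * hammingD z w) := fun z w => by ring
          rw [Finset.sum_congr rfl (fun z _ => Finset.sum_congr rfl (fun w _ => hpt z w))]
          rw [Finset.sum_congr rfl (fun z _ => Finset.sum_add_distrib), Finset.sum_add_distrib]
          congr 1
          · rw [Finset.sum_congr rfl (fun z _ => (Finset.mul_sum _ _ _).symm),
              ← Finset.mul_sum, hGsum a b, mul_one]
          · rw [Finset.sum_congr rfl (fun z _ => (Finset.mul_sum _ _ _).symm),
              ← Finset.mul_sum]
        rw [Finset.sum_congr rfl (fun a _ => Finset.sum_congr rfl (fun b _ => h3 a b))]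
        rw [Finset.sum_congr rfl (fun a _ => Finset.sum_add_distrib), Finset.sum_add_distrib]
      rw [hLHS]
      -- bound each portion
      have hT'nn : 0 ≤ T' := Finset.sum_nonneg (fun a _ => Finset.sum_nonneg (fun b _ =>
        mul_nonneg (hθnn a b) (by split <;> norm_num)))
      set SB : ℝ := ∑ a, μ0 a * Real.sqrt (n * klG (μc a) (νc a) / 2) with hSB
      have hstep : ∑ a, ∑ b, θ a b * cG a b ≤ (1/(1-r)) * (SB + r * T') := by
        have hcGle : ∀ a b, cG a b ≤ (1/(1-r)) * (Real.sqrt (n * klG (μc a) (νc a) / 2)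
            + (if a = b then 0 else r)) := by
          intro a b
          refine le_trans (hGcost a b) ?_
          apply mul_le_mul_of_nonneg_left _ (one_div_nonneg.2 hr1.le)
          apply add_le_add_right
          by_cases hab : a = b
          · subst hab; simp
          · simp only [if_neg hab]
            exact hrd a b
        calc ∑ a, ∑ b, θ a b * cG a b
            ≤ ∑ a, ∑ b, θ a b * ((1/(1-r)) * (Real.sqrt (n * klG (μc a) (νc a) / 2)
                + (if a = b then 0 else r))) := by
              apply Finset.sum_le_sum; intro a _
              apply Finset.sum_le_sum; intro b _
              exact mul_le_mul_of_nonneg_left (hcGle a b) (hθnn a b)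
          _ = (1/(1-r)) * (SB + r * T') := by
              have e1 : ∑ a, ∑ b, θ a b * Real.sqrt (n * klG (μc a) (νc a) / 2) = SB := by
                rw [hSB]
                apply Finset.sum_congr rfl
                intro a _
                rw [← Finset.sum_mul, hθrow a]
              have hpt : ∀ a b, θ a b * ((1/(1-r)) * (Real.sqrt (n * klG (μc a) (νc a) / 2)
                  + (if a = b then 0 else r)))
                  = (1/(1-r)) * (θ a b * Real.sqrt (n * klG (μc a) (νc a) / 2))
                    + ((1/(1-r)) * r) * (θ a b * (if a = b then 0 else 1)) := by
                intro a b
                by_cases hab : a = b <;> simp [hab] <;> ring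
              rw [Finset.sum_congr rfl (fun a _ => Finset.sum_congr rfl
                (fun b _ => hpt a b))]
              rw [Finset.sum_congr rfl (fun a _ => Finset.sum_add_distrib),
                Finset.sum_add_distrib]
              rw [Finset.sum_congr rfl (fun a _ =>
                  (Finset.mul_sum Finset.univ (fun b => θ a b
                    * Real.sqrt (n * klG (μc a) (νc a) / 2)) ((1:ℝ)/(1-r))).symm),
                ← Finset.mul_sum]
              rw [Finset.sum_congr rfl (fun a _ =>
                  (Finset.mul_sum Finset.univ (fun b => θ a b
                    * (if a = b then 0 else 1)) ((1/(1-r)) * r)).symm),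
                ← Finset.mul_sum]
              rw [e1, ← hT']
              ring
      have hSBle : SB ≤ Real.sqrt (n * S / 2) := by
        have hpt : ∀ a, μ0 a * Real.sqrt (n * klG (μc a) (νc a) / 2)
            = Real.sqrt (μ0 a) * Real.sqrt (μ0 a * (n * klG (μc a) (νc a) / 2)) := by
          intro a
          rw [Real.sqrt_mul (hμ0nn a), ← mul_assoc, Real.mul_self_sqrt (hμ0nn a)]
        rw [hSB, Finset.sum_congr rfl (fun a _ => hpt a)]
        refine le_trans (Real.sum_sqrt_mul_sqrt_le Finset.univ hμ0nn (fun a =>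
          mul_nonneg (hμ0nn a) (div_nonneg (mul_nonneg (Nat.cast_nonneg n) (hDnn a))
            (by norm_num)))) ?_
        rw [hμ0s, Real.sqrt_one, one_mul]
        apply Real.sqrt_le_sqrt
        rw [hSdef, Finset.mul_sum, Finset.sum_div]
        apply le_of_eq
        apply Finset.sum_congr rfl
        intro a _
        ring
      have hT'le : T' ≤ Real.sqrt (klG μ0 ρ / 2) + (1/2) * ∑ i, |ρ i - ρ' i| := by
        rw [hT']
        refine le_trans hθcost ?_
        have htri : (1/2 : ℝ) * ∑ i, |μ0 i - ρ' i|
            ≤ (1/2) * ∑ i, |μ0 i - ρ i| + (1/2) * ∑ i, |ρ i - ρ' i| := by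
          rw [← mul_add]
          apply mul_le_mul_of_nonneg_left _ (by norm_num)
          rw [← Finset.sum_add_distrib]
          apply Finset.sum_le_sum
          intro i _
          calc |μ0 i - ρ' i| = |(μ0 i - ρ i) + (ρ i - ρ' i)| := by ring_nf
            _ ≤ |μ0 i - ρ i| + |ρ i - ρ' i| := abs_add_le _ _
        refine le_trans htri ?_
        apply add_le_add_left
        exact pinsker_half μ0 ρ hμ0nn hρnn hμ0s hρs hμ0ac
      have hcomb : Real.sqrt (klG μ0 ρ / 2) + Real.sqrt (n * S / 2)
          ≤ Real.sqrt ((n+1 : ℕ) * klG μ ν / 2) := by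
        have := sqrt_comb (klG μ0 ρ) S n hd0nn hSnn
        rw [hchain]
        refine le_trans this (le_of_eq ?_)
        congr 1
        push_cast
        ring
      -- final arithmetic
      have hfinal : T' + (1/(1-r)) * (SB + r * T') = (1/(1-r)) * (T' + SB) := by
        field_simp
        ring
      calc T' + ∑ a, ∑ b, θ a b * cG a b
          ≤ T' + (1/(1-r)) * (SB + r * T') := by linarith [hstep]
        _ = (1/(1-r)) * (T' + SB) := hfinal
        _ ≤ (1/(1-r)) * (Real.sqrt ((n+1 : ℕ) * klG μ ν / 2) + (1/2) * ∑ i, |ρ i - ρ' i|) := by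
            apply mul_le_mul_of_nonneg_left _ (one_div_nonneg.2 hr1.le)
            have h1 : T' + SB ≤ (Real.sqrt (klG μ0 ρ / 2) + (1/2) * ∑ i, |ρ i - ρ' i|)
                + Real.sqrt (n * S / 2) := by linarith [hT'le, hSBle]
            refine le_trans h1 ?_
            have := hcomb
            linarith

end Main

theorem stmt11 {K n : ℕ} (hK : 0 < K) (hn : 0 < n)
    (Pm : Fin K → Fin K → ℝ)
    (hPnn : ∀ i j, 0 ≤ Pm i j) (hProw : ∀ i, ∑ j, Pm i j = 1)
    (r : ℝ) (hrdef : r = dobrushin Pm) (hr : r < 1)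
    (ϱ : Fin K → ℝ) (hϱnn : ∀ i, 0 ≤ ϱ i) (hϱsum : ∑ i, ϱ i = 1)
    (μ : (Fin n → Fin K) → ℝ) (hμnn : ∀ x, 0 ≤ μ x) (hμsum : ∑ x, μ x = 1) :
    ENNReal.ofReal (wasserstein1Fin hammingD μ (fun x => chainMass ϱ Pm x)) ≤
      (ENNReal.ofReal ((n : ℝ) / (2 * (1 - r) ^ 2)) *
        relEntropyFin μ (fun x => chainMass ϱ Pm x)) ^ (1 / 2 : ℝ) := by
  have hr0 : 0 ≤ r := hrdef ▸ dobrushin_nonneg hK Pm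
  have hr1 : 0 < 1 - r := by linarith
  have hcpos : 0 < (n : ℝ) / (2 * (1 - r) ^ 2) := by
    apply div_pos
    · exact_mod_cast hn
    · positivity
  by_cases hac : ∀ x, chainMass ϱ Pm x = 0 → μ x = 0
  swap
  · -- relative entropy is infinite
    rw [show relEntropyFin μ (fun x => chainMass ϱ Pm x) = ⊤ from by
      rw [relEntropyFin, if_neg hac]]
    rw [ENNReal.mul_top (by
      simp only [ne_eq, ENNReal.ofReal_eq_zero, not_le]
      exact hcpos)]
    rw [ENNReal.top_rpow_of_pos (by norm_num)]
    exact le_top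
  -- main case
  have hD := klG_nonneg μ (fun x => chainMass ϱ Pm x) hμnn
    (fun x => chainMass_nonneg hϱnn hPnn x) hμsum (chainMass_sum ϱ Pm hϱsum hProw) hac
  obtain ⟨γ, hγnn, hγrow, hγcol, hγcost⟩ := marton hK Pm hPnn hProw r
    (fun i j => hrdef ▸ le_dobrushin Pm i j) hr n μ ϱ ϱ hμnn hμsum hϱnn hϱsum hϱnn hϱsum hac
  set D : ℝ := klG μ (chainMass ϱ Pm) with hDdef
  have hWle : wasserstein1Fin hammingD μ (fun x => chainMass ϱ Pm x)
      ≤ Real.sqrt ((n : ℝ) / (2 * (1 - r) ^ 2) * D) := by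
    have hmem : (∑ x, ∑ y, γ x y * hammingD x y) ∈
        {c : ℝ | ∃ γ' : (Fin n → Fin K) → (Fin n → Fin K) → ℝ,
          (∀ a b, 0 ≤ γ' a b) ∧ (∀ a, ∑ b, γ' a b = μ a) ∧
          (∀ b, ∑ a, γ' a b = chainMass ϱ Pm b) ∧
          c = ∑ a, ∑ b, γ' a b * hammingD a b} :=
      ⟨γ, hγnn, hγrow, hγcol, rfl⟩
    have hbdd : BddBelow {c : ℝ | ∃ γ' : (Fin n → Fin K) → (Fin n → Fin K) → ℝ,
        (∀ a b, 0 ≤ γ' a b) ∧ (∀ a, ∑ b, γ' a b = μ a) ∧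
        (∀ b, ∑ a, γ' a b = chainMass ϱ Pm b) ∧
        c = ∑ a, ∑ b, γ' a b * hammingD a b} := by
      refine ⟨0, fun c hc => ?_⟩
      obtain ⟨γ', h1, _, _, h4⟩ := hc
      rw [h4]
      exact Finset.sum_nonneg (fun a _ => Finset.sum_nonneg (fun b _ =>
        mul_nonneg (h1 a b) (hammingD_nonneg a b)))
    refine le_trans (csInf_le hbdd hmem) ?_
    refine le_trans hγcost ?_
    rw [show ∑ i, |ϱ i - ϱ i| = 0 from by simp, mul_zero, add_zero]
    rw [show (1:ℝ)/(1-r) * Real.sqrt ((n:ℝ) * D / 2)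
      = Real.sqrt ((1/(1-r))^2) * Real.sqrt ((n:ℝ) * D / 2) from by
        rw [Real.sqrt_sq (one_div_nonneg.2 hr1.le)]]
    rw [← Real.sqrt_mul (by positivity)]
    apply Real.sqrt_le_sqrt
    apply le_of_eq
    field_simp
  calc ENNReal.ofReal (wasserstein1Fin hammingD μ (fun x => chainMass ϱ Pm x))
      ≤ ENNReal.ofReal (Real.sqrt ((n : ℝ) / (2 * (1 - r) ^ 2) * D)) :=
        ENNReal.ofReal_le_ofReal hWle
    _ = (ENNReal.ofReal ((n : ℝ) / (2 * (1 - r) ^ 2)) *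
        relEntropyFin μ (fun x => chainMass ϱ Pm x)) ^ (1 / 2 : ℝ) := by
        rw [show relEntropyFin μ (fun x => chainMass ϱ Pm x) = ENNReal.ofReal D from by
          rw [relEntropyFin, if_pos hac]; rfl]
        rw [← ENNReal.ofReal_mul hcpos.le]
        rw [Real.sqrt_eq_rpow]
        exact (ENNReal.ofReal_rpow_of_nonneg (by positivity) (by norm_num)).symm
end
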